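/- arXiv:2508.15736 — 3 statements merged into one kernel-verified Lean document; each statement's English description precedes it below -/
import Mathlib

section
/- Let f₁, f₂ be discrete Morse functions on a finite simplicial complex K differing by one birth-death pair: Cr_q(f₁) = Cr_q(f₂) for q ≠ i, i−1, and Cr_i(f₂) = Cr_i(f₁) ∪ {σ̃}, Cr_{i−1}(f₂) = Cr_{i−1}(f₁) ∪ {α̃}, with connectedness coefficient k = n^{f₂}(σ̃, α̃) ≠ 0. Then the death transition g : C_*^{f₂} → C_*^{f₁} composed with the birth transition h : C_*^{f₁} → C_*^{f₂} satisfies g ∘ h = id on C_*^{f₁}. -/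
open Classical
open scoped Classical

noncomputable section

/-- An abstract simplicial complex on a finite vertex set: a finite family of
nonempty finite subsets closed under taking nonempty subsets. -/
structure SComplex (V : Type*) [DecidableEq V] where
  faces : Finset (Finset V)
  nonempty_of_mem : ∀ s ∈ faces, s.Nonempty
  down_closed : ∀ s ∈ faces, ∀ t ⊆ s, t.Nonempty → t ∈ faces

variable {V : Type*} [DecidableEq V] [Fintype V]

/-- `α` is a codimension-one face (facet) of `σ`. -/
def IsFacet {W : Type*} (α σ : Finset W) : Prop := α ⊆ σ ∧ σ.card = α.card + 1

/-- `f` is a discrete Morse function on `K`. -/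
def SComplex.IsDMF (K : SComplex V) (f : Finset V → ℝ) : Prop :=
  ∀ σ ∈ K.faces,
    (K.faces.filter (fun τ => IsFacet σ τ ∧ f τ ≤ f σ)).card ≤ 1 ∧
    (K.faces.filter (fun ν => IsFacet ν σ ∧ f σ ≤ f ν)).card ≤ 1

/-- `σ` is a critical simplex of `f`. -/
def SComplex.IsCritical (K : SComplex V) (f : Finset V → ℝ) (σ : Finset V) : Prop :=
  σ ∈ K.faces ∧
  (K.faces.filter (fun τ => IsFacet σ τ ∧ f τ ≤ f σ)).card = 0 ∧
  (K.faces.filter (fun ν => IsFacet ν σ ∧ f σ ≤ f ν)).card = 0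

/-- The gradient vector field of `f`: pairs `(α,β)` with `α ≺ β`, `f α ≥ f β`. -/
def SComplex.gvf (K : SComplex V) (f : Finset V → ℝ) : Finset (Finset V × Finset V) :=
  (K.faces ×ˢ K.faces).filter (fun p => IsFacet p.1 p.2 ∧ f p.2 ≤ f p.1)

/-- `M` is a matching on the Hasse diagram of `K`. -/
def SComplex.IsMatching (K : SComplex V) (M : Finset (Finset V × Finset V)) : Prop :=
  (∀ p ∈ M, p.1 ∈ K.faces ∧ p.2 ∈ K.faces ∧ IsFacet p.1 p.2) ∧
  (∀ p ∈ M, ∀ q ∈ M, p ≠ q → p.1 ≠ q.1 ∧ p.1 ≠ q.2 ∧ p.2 ≠ q.1 ∧ p.2 ≠ q.2)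

/-- One step of a `V`-path: from `a` go up to its matched simplex `β` and down to `b ≠ a`. -/
def PathStep (M : Finset (Finset V × Finset V)) (a b : Finset V) : Prop :=
  a ≠ b ∧ ∃ β, (a, β) ∈ M ∧ IsFacet b β

/-- A `V`-path, recorded by its list of lower-dimensional simplices. -/
def IsVPath (M : Finset (Finset V × Finset V)) : List (Finset V) → Prop
  | [] => False
  | [_] => True
  | a :: b :: rest => PathStep M a b ∧ IsVPath M (b :: rest)

/-- `M` has no nontrivial closed `V`-path. -/
def IsAcyclic (M : Finset (Finset V × Finset V)) : Prop :=
  ¬ ∃ (a : Finset V) (l : List (Finset V)), l ≠ [] ∧ IsVPath M (a :: (l ++ [a]))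

/-- An acyclic matching (gradient vector field) on `K`. -/
def SComplex.IsAcyclicMatching (K : SComplex V) (M : Finset (Finset V × Finset V)) : Prop :=
  K.IsMatching M ∧ IsAcyclic M

/-- The incidence number `[σ:α] = ±1` for a facet `α ≺ σ`. -/
def incidence (σ α : Finset V) : ℤ :=
  if IsFacet α σ then
    (-1 : ℤ) ^ ((σ.filter (fun w => ∀ v ∈ σ \ α,
      ((Fintype.equivFin V) w).val < ((Fintype.equivFin V) v).val)).card)
  else 0

/-- The simplex matched above `a` by `M` (or `∅` if `a` is unmatched). -/
def matchOf (M : Finset (Finset V × Finset V)) (a : Finset V) : Finset V :=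
  if h : ∃ β, (a, β) ∈ M then h.choose else ∅

/-- The weight `m(γ)` of a path: product of the incidence numbers along it. -/
def pathWeight (M : Finset (Finset V × Finset V)) : List (Finset V) → ℤ
  | [] => 1
  | [_] => 1
  | a :: b :: rest =>
      -(incidence (matchOf M a) a * incidence (matchOf M a) b) * pathWeight M (b :: rest)

/-- All duplicate-free lists with entries in `s`. -/
def nodupLists (s : Finset (Finset V)) : Finset (List (Finset V)) :=
  s.powerset.biUnion (fun t => t.val.toList.permutations.toFinset)

/-- The (finite) set of `M`-gradient paths in `K` from `a` to `b`. -/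
def SComplex.pathsBetween (K : SComplex V) (M : Finset (Finset V × Finset V))
    (a b : Finset V) : Finset (List (Finset V)) :=
  (nodupLists K.faces).filter
    (fun l => IsVPath M l ∧ l.head? = some a ∧ l.getLast? = some b)

/-- The connectedness coefficient `n^M(σ, α)`: signed count of gradient paths from
the boundary of `σ` to `α`, weighted by incidence numbers. -/
def SComplex.nCoeff (K : SComplex V) (M : Finset (Finset V × Finset V))
    (σ α : Finset V) : ℤ :=
  ∑ β ∈ K.faces.filter (fun β => IsFacet β σ),
    incidence σ β * ∑ l ∈ K.pathsBetween M β α, pathWeight M l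

/-- The 0-dimensional connectedness coefficient: signed count of paths from `a` to `b`. -/
def SComplex.nCoeff0 (K : SComplex V) (M : Finset (Finset V × Finset V))
    (a b : Finset V) : ℤ :=
  ∑ l ∈ K.pathsBetween M a b, pathWeight M l

end

noncomputable section

variable {V : Type*} [DecidableEq V] [Fintype V]

/-- Extend a map on basis simplices to a linear map on chains. -/
def extendLin (B : Finset V → (Finset V →₀ ℤ)) :
    (Finset V →₀ ℤ) →ₗ[ℤ] (Finset V →₀ ℤ) :=
  Finsupp.lsum ℤ (fun σ => LinearMap.toSpanSingleton ℤ _ (B σ))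

/-- The boundary operator of the discrete Morse complex of `f`, as a linear map on
the chains generated by all simplices (nonzero only on critical simplices):
`∂^f σ = Σ_α n^f(σ,α) α` over critical `α` of one lower dimension. -/
def morseBoundary (K : SComplex V) (f : Finset V → ℝ) :
    (Finset V →₀ ℤ) →ₗ[ℤ] (Finset V →₀ ℤ) :=
  extendLin (fun σ =>
    if K.IsCritical f σ then
      ∑ α ∈ K.faces.filter (fun α => K.IsCritical f α ∧ α.card + 1 = σ.card),
        K.nCoeff (K.gvf f) σ α • Finsupp.single α 1
    else 0)

theorem death_comp_birth_eq_id_general (K : SComplex V)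
    (f₁ f₂ : Finset V → ℝ)
    (i : ℕ) (σt αt : Finset V)
    (hσc₁ : ¬ K.IsCritical f₁ σt) (hαc₁ : ¬ K.IsCritical f₁ αt)
    (hsame : ∀ δ, δ ≠ σt → δ ≠ αt → (K.IsCritical f₁ δ ↔ K.IsCritical f₂ δ))
    (h g : (Finset V →₀ ℤ) →ₗ[ℤ] (Finset V →₀ ℤ))
    -- the birth transition `h`
    (hbirth : ∀ δ, K.IsCritical f₁ δ →
      h (Finsupp.single δ 1) =
        if δ.card = i + 1 then
          Finsupp.single δ 1 + K.nCoeff (K.gvf f₁) δ σt • Finsupp.single σt 1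
        else Finsupp.single δ 1)
    -- the death transition `g`
    (hdeath₁ : ∀ δ, K.IsCritical f₂ δ → δ ≠ σt → δ ≠ αt →
      g (Finsupp.single δ 1) = Finsupp.single δ 1)
    (hdeath₂ : g (Finsupp.single σt 1) = 0) :
    ∀ δ, K.IsCritical f₁ δ → g (h (Finsupp.single δ 1)) = Finsupp.single δ 1 := by
  intro δ hδ
  have hδσ : δ ≠ σt := by rintro rfl; exact hσc₁ hδ
  have hδα : δ ≠ αt := by rintro rfl; exact hαc₁ hδ
  have hgδ : g (Finsupp.single δ 1) = Finsupp.single δ 1 :=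
    hdeath₁ δ ((hsame δ hδσ hδα).mp hδ) hδσ hδα
  rw [hbirth δ hδ]
  split_ifs
  · rw [map_add, map_smul, hgδ, hdeath₂, smul_zero, add_zero]
  · exact hgδ

/-- for discrete Morse functions `f₁, f₂` differing by one birth-death
pair `(σ̃, α̃)` in dimensions `(i, i−1)` with `k = n^{f₂}(σ̃, α̃) ≠ 0`, the death
transition `g` composed with the birth transition `h` is the identity on `C_*^{f₁}`. -/
theorem death_comp_birth_eq_id (K : SComplex V)
    (f₁ f₂ : Finset V → ℝ) (hf₁ : K.IsDMF f₁) (hf₂ : K.IsDMF f₂)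
    (i : ℕ) (hi : 1 ≤ i) (σt αt : Finset V)
    (hσK : σt ∈ K.faces) (hαK : αt ∈ K.faces)
    (hσdim : σt.card = i + 1) (hαdim : αt.card = i)
    (hσc₂ : K.IsCritical f₂ σt) (hαc₂ : K.IsCritical f₂ αt)
    (hσc₁ : ¬ K.IsCritical f₁ σt) (hαc₁ : ¬ K.IsCritical f₁ αt)
    (hsame : ∀ δ, δ ≠ σt → δ ≠ αt → (K.IsCritical f₁ δ ↔ K.IsCritical f₂ δ))
    (k : ℤ) (hk : k = K.nCoeff (K.gvf f₂) σt αt) (hk0 : k ≠ 0)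
    (h g : (Finset V →₀ ℤ) →ₗ[ℤ] (Finset V →₀ ℤ))
    -- the birth transition `h`
    (hbirth : ∀ δ, K.IsCritical f₁ δ →
      h (Finsupp.single δ 1) =
        if δ.card = i + 1 then
          Finsupp.single δ 1 + K.nCoeff (K.gvf f₁) δ σt • Finsupp.single σt 1
        else Finsupp.single δ 1)
    -- the death transition `g`
    (hdeath₁ : ∀ δ, K.IsCritical f₂ δ → δ ≠ σt → δ ≠ αt →
      g (Finsupp.single δ 1) = Finsupp.single δ 1)
    (hdeath₂ : g (Finsupp.single σt 1) = 0)
    (hdeath₃ : g (Finsupp.single αt 1) =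
      ∑ α ∈ K.faces.filter (fun α => K.IsCritical f₁ α ∧ α.card = i),
        K.nCoeff (K.gvf f₂) αt α • Finsupp.single α 1) :
    ∀ δ, K.IsCritical f₁ δ → g (h (Finsupp.single δ 1)) = Finsupp.single δ 1 :=
  death_comp_birth_eq_id_general K f₁ f₂ i σt αt hσc₁ hαc₁ hsame h g hbirth hdeath₁ hdeath₂

end
end

section
/- Let K be a finite simplicial complex and V₁ ⊂ V₂ acyclic matchings on K with |V₂| = |V₁| + 1, say V₂ = V₁ ∪ {(α, σ)} with α a codimension-1 face of σ. Then the connectedness coefficient n^{V₁}(σ, α) is nonzero. -/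
open Classical
open scoped Classical

private lemma isVPath_mono {V : Type*} [DecidableEq V] [Fintype V]
    {M₁ M₂ : Finset (Finset V × Finset V)} (h : M₁ ⊆ M₂) :
    ∀ l, IsVPath M₁ l → IsVPath M₂ l
  | [] => fun hl => hl
  | [_] => fun hl => hl
  | a :: b :: rest => by
    rintro ⟨⟨hne, β, hβ, hf⟩, hrest⟩
    exact ⟨⟨hne, β, h hβ, hf⟩, isVPath_mono h (b :: rest) hrest⟩

private lemma nodup_of_mem_nodupLists {V : Type*} [DecidableEq V] [Fintype V]
    {s : Finset (Finset V)} {l : List (Finset V)} (h : l ∈ nodupLists s) :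
    l.Nodup := by
  simp only [nodupLists, Finset.mem_biUnion, List.mem_toFinset, List.mem_permutations] at h
  obtain ⟨t, _, hp⟩ := h
  have ht : t.val.toList.Nodup := by
    have := t.nodup
    rwa [← Multiset.coe_nodup, Multiset.coe_toList]
  exact hp.nodup_iff.mpr ht

private lemma singleton_mem_nodupLists {V : Type*} [DecidableEq V] [Fintype V]
    {s : Finset (Finset V)} {a : Finset V} (ha : a ∈ s) : [a] ∈ nodupLists s := by
  simp only [nodupLists, Finset.mem_biUnion, List.mem_toFinset, List.mem_permutations]
  refine ⟨{a}, Finset.mem_powerset.mpr (Finset.singleton_subset_iff.mpr ha), ?_⟩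
  rw [← Multiset.coe_eq_coe, Multiset.coe_toList]
  simp

/-- if `V₁ ⊂ V₂ = V₁ ∪ {(α,σ)}` are acyclic matchings on `K` with
`|V₂| = |V₁| + 1`, then the connectedness coefficient `n^{V₁}(σ, α)` is nonzero. -/
theorem nCoeff_ne_zero_of_extend_acyclic {V : Type*} [DecidableEq V] [Fintype V]
    (K : SComplex V) (M₁ M₂ : Finset (Finset V × Finset V))
    (h₁ : K.IsAcyclicMatching M₁) (h₂ : K.IsAcyclicMatching M₂)
    (hsub : M₁ ⊆ M₂)
    (α σ : Finset V) (hfacet : IsFacet α σ)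
    (hnotmem : (α, σ) ∉ M₁)
    (hM₂ : M₂ = insert (α, σ) M₁)
    (hcard : M₂.card = M₁.card + 1) :
    K.nCoeff M₁ σ α ≠ 0 := by
  have hmem₂ : (α, σ) ∈ M₂ := by rw [hM₂]; exact Finset.mem_insert_self _ _
  have hα : α ∈ K.faces := ((h₂.1.1) _ hmem₂).1
  -- No `M₁`-path from a facet `β ≠ α` of `σ` to `α`: it would close up to a `M₂`-cycle.
  have hempty : ∀ β : Finset V, IsFacet β σ → β ≠ α → K.pathsBetween M₁ β α = ∅ := by
    intro β hβσ hβα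
    rw [Finset.eq_empty_iff_forall_notMem]
    intro l hl
    simp only [SComplex.pathsBetween, Finset.mem_filter] at hl
    obtain ⟨hln, hlp, hh, ht⟩ := hl
    obtain ⟨b, rest, rfl⟩ : ∃ b rest, l = b :: rest := by
      cases l with
      | nil => simp at hh
      | cons b rest => exact ⟨b, rest, rfl⟩
    have hb : b = β := by simpa using hh
    subst hb
    have hlne : (b :: rest) ≠ [] := by simp
    have hlast : (b :: rest).getLast hlne = α := by
      rwa [List.getLast?_eq_getLast hlne, Option.some_inj] at ht
    have hdecomp : (b :: rest).dropLast ++ [α] = b :: rest := by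
      rw [← hlast]; exact List.dropLast_append_getLast hlne
    have hdne : (b :: rest).dropLast ≠ [] := by
      cases rest with
      | nil =>
        exfalso; apply hβα
        simpa using hlast
      | cons c cs => simp
    have hpath₂ : IsVPath M₂ (α :: (b :: rest)) := by
      refine ⟨⟨Ne.symm hβα, σ, hmem₂, hβσ⟩, ?_⟩
      exact isVPath_mono hsub _ hlp
    exact h₂.2 ⟨α, (b :: rest).dropLast, hdne, by rw [hdecomp]; exact hpath₂⟩
  -- The only path from `α` to `α` is the trivial one.
  have hsingle : K.pathsBetween M₁ α α = {[α]} := by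
    ext l
    simp only [SComplex.pathsBetween, Finset.mem_filter, Finset.mem_singleton]
    constructor
    · rintro ⟨hln, hlp, hh, ht⟩
      have hnd := nodup_of_mem_nodupLists hln
      cases l with
      | nil => simp at hh
      | cons b rest =>
        have hb : b = α := by simpa using hh
        subst hb
        cases rest with
        | nil => rfl
        | cons c cs =>
          exfalso
          have hne2 : (c :: cs : List (Finset V)) ≠ [] := by simp
          have hne : (b :: c :: cs : List (Finset V)) ≠ [] := by simp
          have hlast : (b :: c :: cs).getLast hne = b := by
            rwa [List.getLast?_eq_getLast hne, Option.some_inj] at ht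
          rw [List.getLast_cons hne2] at hlast
          have hmem : b ∈ c :: cs := hlast ▸ List.getLast_mem hne2
          exact (List.nodup_cons.mp hnd).1 hmem
    · rintro rfl
      exact ⟨singleton_mem_nodupLists hα, trivial, rfl, rfl⟩
  rw [SComplex.nCoeff, Finset.sum_eq_single α]
  · rw [hsingle, Finset.sum_singleton]
    simp only [pathWeight, mul_one, incidence, if_pos hfacet]
    exact pow_ne_zero _ (by norm_num)
  · intro β hβ hβα
    rw [hempty β (Finset.mem_filter.mp hβ).2 hβα, Finset.sum_empty, mul_zero]
  · intro hαn
    exfalso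
    apply hαn
    rw [Finset.mem_filter]
    exact ⟨hα, hfacet⟩
end

section
/- Let K be a finite simplicial complex and f a discrete Morse function on K. Then Σ_q (−1)^q #Cr_q(f) = χ(K), where χ(K) = Σ_q (−1)^q #K_q is the Euler characteristic of K. Equivalently, since χ(K) = Σ_q (−1)^q β_q(K), the alternating sum of the numbers of critical simplices equals the alternating sum of the Betti numbers (over ℚ). -/
open Classical
open scoped Classical

noncomputable section MorseAux

variable {V : Type*} [DecidableEq V] [Fintype V]

/-- The set of cofaces of `σ` with smaller-or-equal `f`-value. -/
def upSet (K : SComplex V) (f : Finset V → ℝ) (σ : Finset V) : Finset (Finset V) :=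
  K.faces.filter (fun τ => IsFacet σ τ ∧ f τ ≤ f σ)

/-- The set of faces of `σ` with larger-or-equal `f`-value. -/
def downSet (K : SComplex V) (f : Finset V → ℝ) (σ : Finset V) : Finset (Finset V) :=
  K.faces.filter (fun ν => IsFacet ν σ ∧ f σ ≤ f ν)

/-- Exclusivity: for a DMF, a simplex cannot have both a low coface and a high face. -/
lemma exclusivity (K : SComplex V) (f : Finset V → ℝ) (hf : K.IsDMF f)
    {σ : Finset V} (hσ : σ ∈ K.faces)
    (hup : (upSet K f σ).Nonempty) (hdn : (downSet K f σ).Nonempty) : False := by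
  obtain ⟨τ, hτ⟩ := hup
  obtain ⟨ν, hν⟩ := hdn
  simp only [upSet, downSet, Finset.mem_filter] at hτ hν
  obtain ⟨hτK, ⟨hστ, hcτ⟩, hfτ⟩ := hτ
  obtain ⟨hνK, ⟨hνσ, hcσ⟩, hfν⟩ := hν
  have hy : (τ \ σ).Nonempty := by
    rw [← Finset.card_pos, Finset.card_sdiff_of_subset hστ]; omega
  obtain ⟨y, hy⟩ := hy
  rw [Finset.mem_sdiff] at hy
  set σ' := insert y ν with hσ'def
  have hyν : y ∉ ν := fun h => hy.2 (hνσ h)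
  have hcard' : σ'.card = ν.card + 1 := Finset.card_insert_of_notMem hyν
  have hsub' : σ' ⊆ τ := by
    intro z hz
    rcases Finset.mem_insert.mp hz with rfl | hz
    · exact hy.1
    · exact hστ (hνσ hz)
  have hσ'K : σ' ∈ K.faces :=
    K.down_closed τ hτK σ' hsub' ⟨y, Finset.mem_insert_self _ _⟩
  have hne : σ' ≠ σ := fun h => hy.2 (h ▸ Finset.mem_insert_self y ν)
  have hfacσ'τ : IsFacet σ' τ := ⟨hsub', by omega⟩
  have hfacνσ' : IsFacet ν σ' := ⟨Finset.subset_insert _ _, hcard'⟩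
  have hfσ' : ¬ f τ ≤ f σ' := by
    intro hle
    have h2 := (hf τ hτK).2
    have : 1 < (K.faces.filter (fun ν' => IsFacet ν' τ ∧ f τ ≤ f ν')).card :=
      Finset.one_lt_card.mpr
        ⟨σ, Finset.mem_filter.mpr ⟨hσ, ⟨hστ, hcτ⟩, hfτ⟩,
         σ', Finset.mem_filter.mpr ⟨hσ'K, hfacσ'τ, hle⟩, fun h => hne h.symm⟩
    omega
  have h1 := (hf ν hνK).1
  have : 1 < (K.faces.filter (fun τ' => IsFacet ν τ' ∧ f τ' ≤ f ν)).card :=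
    Finset.one_lt_card.mpr
      ⟨σ, Finset.mem_filter.mpr ⟨hσ, ⟨hνσ, hcσ⟩, hfν⟩,
       σ', Finset.mem_filter.mpr ⟨hσ'K, hfacνσ',
         ((not_le.mp hfσ').le.trans (hfτ.trans hfν))⟩, fun h => hne h.symm⟩
  omega

/-- The gradient partner of a simplex. -/
def partner (K : SComplex V) (f : Finset V → ℝ) (σ : Finset V) : Finset V :=
  if h : (upSet K f σ).Nonempty then h.choose
  else if h' : (downSet K f σ).Nonempty then h'.choose
  else ∅

lemma noncritical_iff {K : SComplex V} {f : Finset V → ℝ} {σ : Finset V}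
    (hσ : σ ∈ K.faces) :
    ¬ K.IsCritical f σ ↔ ((upSet K f σ).Nonempty ∨ (downSet K f σ).Nonempty) := by
  unfold SComplex.IsCritical upSet downSet
  rw [← Finset.card_pos, ← Finset.card_pos]
  constructor
  · intro h
    by_contra hc
    push_neg at hc
    exact h ⟨hσ, by omega, by omega⟩
  · rintro (h | h) ⟨_, h1, h2⟩ <;> omega

lemma partner_spec (K : SComplex V) (f : Finset V → ℝ) (hf : K.IsDMF f)
    {σ : Finset V} (hσ : σ ∈ K.faces) (hnc : ¬ K.IsCritical f σ) :
    partner K f σ ∈ K.faces ∧ ¬ K.IsCritical f (partner K f σ) ∧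
    partner K f (partner K f σ) = σ ∧
    (σ.card = (partner K f σ).card + 1 ∨ (partner K f σ).card = σ.card + 1) := by
  rcases (noncritical_iff hσ).mp hnc with hup | hdn
  · -- matched upward: partner is a coface τ
    have hpart : partner K f σ = hup.choose := dif_pos hup
    set τ := hup.choose with hτdef
    have hτmem : τ ∈ upSet K f σ := hup.choose_spec
    simp only [upSet, Finset.mem_filter] at hτmem
    obtain ⟨hτK, hfac, hfτ⟩ := hτmem
    have hσdn : σ ∈ downSet K f τ :=
      Finset.mem_filter.mpr ⟨hσ, hfac, hfτ⟩
    have hdnτ : (downSet K f τ).Nonempty := ⟨σ, hσdn⟩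
    have hupτ : ¬ (upSet K f τ).Nonempty := fun h => exclusivity K f hf hτK h hdnτ
    have hτnc : ¬ K.IsCritical f τ := (noncritical_iff hτK).mpr (Or.inr hdnτ)
    have hpτ : partner K f τ = hdnτ.choose := by
      rw [partner, dif_neg hupτ, dif_pos hdnτ]
    have hcard : (downSet K f τ).card ≤ 1 := (hf τ hτK).2
    have hchoose : hdnτ.choose = σ :=
      Finset.card_le_one.mp hcard _ hdnτ.choose_spec _ hσdn
    rw [hpart]
    exact ⟨hτK, hτnc, by rw [hpτ, hchoose], Or.inr hfac.2⟩
  · -- matched downward: partner is a face ν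
    have hup : ¬ (upSet K f σ).Nonempty := fun h => exclusivity K f hf hσ h hdn
    have hpart : partner K f σ = hdn.choose := by
      rw [partner, dif_neg hup, dif_pos hdn]
    set ν := hdn.choose with hνdef
    have hνmem : ν ∈ downSet K f σ := hdn.choose_spec
    simp only [downSet, Finset.mem_filter] at hνmem
    obtain ⟨hνK, hfac, hfν⟩ := hνmem
    have hσup : σ ∈ upSet K f ν :=
      Finset.mem_filter.mpr ⟨hσ, hfac, hfν⟩
    have hupν : (upSet K f ν).Nonempty := ⟨σ, hσup⟩
    have hνnc : ¬ K.IsCritical f ν := (noncritical_iff hνK).mpr (Or.inl hupν)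
    have hpν : partner K f ν = hupν.choose := dif_pos hupν
    have hcard : (upSet K f ν).card ≤ 1 := (hf ν hνK).1
    have hchoose : hupν.choose = σ :=
      Finset.card_le_one.mp hcard _ hupν.choose_spec _ hσup
    rw [hpart]
    exact ⟨hνK, hνnc, by rw [hpν, hchoose], Or.inl hfac.2⟩

/-- The alternating sum over non-critical simplices vanishes. -/
lemma nc_sum_zero (K : SComplex V) (f : Finset V → ℝ) (hf : K.IsDMF f) :
    ∑ σ ∈ K.faces.filter (fun σ => ¬ K.IsCritical f σ),
      (-1 : ℤ) ^ (σ.card - 1) = 0 := by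
  apply Finset.sum_involution (fun σ _ => partner K f σ)
  · intro σ hσ
    rw [Finset.mem_filter] at hσ
    obtain ⟨hpm, hpnc, hpp, hc⟩ := partner_spec K f hf hσ.1 hσ.2
    have h1 : 1 ≤ σ.card := (K.nonempty_of_mem σ hσ.1).card_pos
    have h2 : 1 ≤ (partner K f σ).card := (K.nonempty_of_mem _ hpm).card_pos
    rcases hc with h | h
    · have : σ.card - 1 = ((partner K f σ).card - 1) + 1 := by omega
      rw [this, pow_succ]; ring
    · have : (partner K f σ).card - 1 = (σ.card - 1) + 1 := by omega
      rw [this, pow_succ]; ring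
  · intro σ hσ _
    rw [Finset.mem_filter] at hσ
    obtain ⟨hpm, hpnc, hpp, hc⟩ := partner_spec K f hf hσ.1 hσ.2
    intro h
    rcases hc with h' | h' <;> rw [h] at h' <;> omega
  · intro σ hσ
    rw [Finset.mem_filter] at hσ
    obtain ⟨hpm, hpnc, hpp, hc⟩ := partner_spec K f hf hσ.1 hσ.2
    exact Finset.mem_filter.mpr ⟨hpm, hpnc⟩
  · intro σ hσ
    rw [Finset.mem_filter] at hσ
    exact (partner_spec K f hf hσ.1 hσ.2).2.2.1

/-- Converting the alternating sum by dimension into a sum over the simplices. -/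
lemma alt_sum_eq (S : Finset (Finset V)) (hS : ∀ σ ∈ S, σ.Nonempty) :
    ∑ q ∈ Finset.range (Fintype.card V + 1),
        (-1 : ℤ) ^ q * ((S.filter (fun σ => σ.card = q + 1)).card : ℤ)
      = ∑ σ ∈ S, (-1 : ℤ) ^ (σ.card - 1) := by
  have h1 : ∀ q : ℕ, S.filter (fun σ => σ.card = q + 1)
      = S.filter (fun σ => σ.card - 1 = q) := by
    intro q
    apply Finset.filter_congr
    intro σ hσ
    have := (hS σ hσ).card_pos
    constructor <;> intro h <;> omega
  have hmaps : ∀ σ ∈ S, σ.card - 1 ∈ Finset.range (Fintype.card V + 1) := by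
    intro σ hσ
    rw [Finset.mem_range]
    have := Finset.card_le_univ σ
    omega
  rw [← Finset.sum_fiberwise_of_maps_to hmaps (fun σ => (-1 : ℤ) ^ (σ.card - 1))]
  apply Finset.sum_congr rfl
  intro q _
  rw [h1 q]
  rw [Finset.sum_congr rfl (fun σ hσ => by
    rw [(Finset.mem_filter.mp hσ).2])]
  rw [Finset.sum_const, nsmul_eq_mul, mul_comm]

end MorseAux

/-- Morse equality: for a discrete Morse function `f` on a finite
simplicial complex `K`, the alternating sum of the numbers of critical `q`-simplices
equals the Euler characteristic `χ(K) = Σ_q (−1)^q #K_q`. -/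
theorem morse_equality {V : Type*} [DecidableEq V] [Fintype V]
    (K : SComplex V) (f : Finset V → ℝ) (hf : K.IsDMF f) :
    ∑ q ∈ Finset.range (Fintype.card V + 1),
        (-1 : ℤ) ^ q * ((K.faces.filter (fun σ => K.IsCritical f σ ∧ σ.card = q + 1)).card : ℤ)
      = ∑ q ∈ Finset.range (Fintype.card V + 1),
        (-1 : ℤ) ^ q * ((K.faces.filter (fun σ => σ.card = q + 1)).card : ℤ) := by
  have hC : ∀ q : ℕ, K.faces.filter (fun σ => K.IsCritical f σ ∧ σ.card = q + 1)
      = (K.faces.filter (fun σ => K.IsCritical f σ)).filter (fun σ => σ.card = q + 1) := by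
    intro q; rw [Finset.filter_filter]
  simp only [hC]
  rw [alt_sum_eq _ (fun σ hσ => K.nonempty_of_mem σ (Finset.mem_of_mem_filter σ hσ)),
    alt_sum_eq _ K.nonempty_of_mem]
  have hsub : K.faces.filter (fun σ => K.IsCritical f σ) ⊆ K.faces :=
    Finset.filter_subset _ _
  rw [← Finset.sum_sdiff hsub, ← Finset.filter_not, nc_sum_zero K f hf, zero_add]
end
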